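/- Let X be a metric space and let ζ : C_cc(X) → ℝ be a functional that is monotone and Lipschitz with respect to the supremum norm. Let (A_n)_{n∈ℕ} be a sequence of nonempty compact ζ-superheavy subsets of X and let A ⊆ X be a nonempty compact subset such that the Hausdorff distance between A_n and A tends to 0 as n → ∞. Then A is ζ-superheavy. -/

import Mathlib

open Set Filter

/-- `Ccc f` : `f` is continuous and differs from some constant by a compactly
supported function, i.e. `f ∈ C_cc(X)`. -/
def Ccc {X : Type*} [TopologicalSpace X] (f : X → ℝ) : Prop :=
  Continuous f ∧ ∃ c : ℝ, HasCompactSupport (fun x => f x - c)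

/-- Monotonicity of a functional on `C_cc(X)`. -/
def IsMonotoneFunctional {X : Type*} [TopologicalSpace X] (ζ : (X → ℝ) → ℝ) : Prop :=
  ∀ H₁ H₂ : X → ℝ, Ccc H₁ → Ccc H₂ → (∀ x, H₁ x ≤ H₂ x) → ζ H₁ ≤ ζ H₂

/-- Lipschitz continuity of a functional on `C_cc(X)` with respect to the
supremum norm: if `|H₁ - H₂| ≤ C` everywhere then `|ζ H₁ - ζ H₂| ≤ C`. -/
def IsLipschitzFunctional {X : Type*} [TopologicalSpace X] (ζ : (X → ℝ) → ℝ) : Prop :=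
  ∀ H₁ H₂ : X → ℝ, Ccc H₁ → Ccc H₂ → ∀ C : ℝ,
    (∀ x, |H₁ x - H₂ x| ≤ C) → |ζ H₁ - ζ H₂| ≤ C

/-- `A` is `ζ`-superheavy: `ζ(H) ≤ max_A H` for every `H ∈ C_cc(X)`. -/
def IsSuperheavy {X : Type*} [TopologicalSpace X] (ζ : (X → ℝ) → ℝ) (A : Set X) : Prop :=
  ∀ H : X → ℝ, Ccc H → ζ H ≤ sSup (H '' A)

/-! A function in `C_cc(X)` is uniformly continuous, so once the Hausdorff distance from `A n`
to `B` is below its modulus `δ` for `ε`, every point of `A n` is `δ`-close to a point of `B` and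
`max_{A n} H ≤ max_B H + ε`. Superheaviness of `A n` then gives `ζ H ≤ max_B H + ε`. -/

open Topology Metric

theorem Ccc.uniformContinuous {X : Type*} [UniformSpace X] {H : X → ℝ} (hH : Ccc H) :
    UniformContinuous H := by
  obtain ⟨hcont, c, hc⟩ := hH
  simpa using (hc.uniformContinuous_of_continuous (hcont.sub continuous_const)).add
    (uniformContinuous_const (b := c))

section HausdorffDist

variable {X : Type*} [PseudoMetricSpace X]

theorem sSup_image_le_add_of_hausdorffDist_lt {f : X → ℝ} {s t : Set X} {δ ε : ℝ}
    (hf : ∀ x y, dist x y < δ → dist (f x) (f y) < ε) (hs : s.Nonempty)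
    (hfin : hausdorffEDist s t ≠ ⊤) (ht : BddAbove (f '' t)) (hst : hausdorffDist s t < δ) :
    sSup (f '' s) ≤ sSup (f '' t) + ε := by
  refine csSup_le (hs.image f) ?_
  rintro _ ⟨x, hx, rfl⟩
  obtain ⟨y, hy, hxy⟩ := exists_dist_lt_of_hausdorffDist_lt hx hst hfin
  have hfxy : |f x - f y| < ε := by simpa only [Real.dist_eq] using hf x y hxy
  have hfy : f y ≤ sSup (f '' t) := le_csSup ht (mem_image_of_mem f hy)
  linarith [(abs_lt.1 hfxy).2]

theorem eventually_sSup_image_le_add_of_tendsto_hausdorffDist {ι : Type*} {l : Filter ι}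
    {f : X → ℝ} (hf : UniformContinuous f) {s : ι → Set X} {t : Set X}
    (hs : ∀ i, (s i).Nonempty) (hsb : ∀ i, Bornology.IsBounded (s i))
    (ht : IsCompact t) (htne : t.Nonempty)
    (hconv : Tendsto (fun i => hausdorffDist (s i) t) l (𝓝 0)) {ε : ℝ} (hε : 0 < ε) :
    ∀ᶠ i in l, sSup (f '' s i) ≤ sSup (f '' t) + ε := by
  obtain ⟨δ, hδ, hfδ⟩ := Metric.uniformContinuous_iff.1 hf ε hε
  have hbdd : BddAbove (f '' t) := (ht.image hf.continuous).bddAbove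
  filter_upwards [hconv.eventually (gt_mem_nhds hδ)] with i hi
  exact sSup_image_le_add_of_hausdorffDist_lt (fun _ _ h => hfδ h) (hs i)
    (hausdorffEDist_ne_top_of_nonempty_of_bounded (hs i) htne (hsb i) ht.isBounded) hbdd hi

end HausdorffDist

theorem superheavy_of_hausdorff_limit_general
    {X : Type*} [MetricSpace X] (ζ : (X → ℝ) → ℝ)
    (A : ℕ → Set X) (hAcpt : ∀ n, IsCompact (A n)) (hAne : ∀ n, (A n).Nonempty)
    (hAsh : ∀ n, IsSuperheavy ζ (A n))
    (B : Set X) (hB : IsCompact B) (hBne : B.Nonempty)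
    (hconv : Tendsto (fun n => Metric.hausdorffDist (A n) B) atTop (nhds 0)) :
    IsSuperheavy ζ B := by
  intro H hH
  refine le_of_forall_pos_le_add fun ε hε => ?_
  obtain ⟨n, hn⟩ := (eventually_sSup_image_le_add_of_tendsto_hausdorffDist hH.uniformContinuous
    hAne (fun n => (hAcpt n).isBounded) hB hBne hconv hε).exists
  exact (hAsh n H hH).trans hn

theorem superheavy_of_hausdorff_limit
    {X : Type*} [MetricSpace X] (ζ : (X → ℝ) → ℝ)
    (hmono : IsMonotoneFunctional ζ) (hlip : IsLipschitzFunctional ζ)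
    (A : ℕ → Set X) (hAcpt : ∀ n, IsCompact (A n)) (hAne : ∀ n, (A n).Nonempty)
    (hAsh : ∀ n, IsSuperheavy ζ (A n))
    (B : Set X) (hB : IsCompact B) (hBne : B.Nonempty)
    (hconv : Tendsto (fun n => Metric.hausdorffDist (A n) B) atTop (nhds 0)) :
    IsSuperheavy ζ B :=
  superheavy_of_hausdorff_limit_general ζ A hAcpt hAne hAsh B hB hBne hconv
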